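/- arXiv:2208.09342 — 4 statements merged into one kernel-verified Lean document; each statement's English description precedes it below -/
import Mathlib

section
/- Let N be a set, (N_i)_{i∈I} a family of finite subsets of N, and K a positive integer. Suppose that for every finite subset F of I one has |F| ≤ K · |⋃_{i∈F} N_i|. Then there exist a partition (I_j)_{j=1}^K of I and injective maps ν_j : I_j → N for j = 1, …, K such that ν_j(i) ∈ N_i for every i ∈ I_j. -/
/-- `K`-fold Hall marriage theorem (Wojtaszczyk's version).
A partition of `I` into `K` pieces is encoded by a coloring `c : I → Fin K`,
and the injective selectors are encoded by one map `ν` that is injective on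
each color class. -/
theorem stmt_2 {I N : Type*} [DecidableEq N] (Ns : I → Finset N) (K : ℕ) (hK : 0 < K)
    (h : ∀ F : Finset I, F.card ≤ K * (F.biUnion Ns).card) :
    ∃ (c : I → Fin K) (ν : I → N),
      (∀ i, ν i ∈ Ns i) ∧ ∀ j : Fin K, Set.InjOn ν {i | c i = j} := by
  set t : I → Finset (N × Fin K) := fun i => Ns i ×ˢ Finset.univ with ht
  have key : ∀ F : Finset I, F.biUnion t = (F.biUnion Ns) ×ˢ Finset.univ := by
    intro F
    ext ⟨n, k⟩
    simp [ht, Finset.mem_biUnion, Finset.mem_product]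
  have hall : ∀ F : Finset I, F.card ≤ (F.biUnion t).card := by
    intro F
    rw [key, Finset.card_product, Finset.card_univ, Fintype.card_fin, mul_comm]
    exact h F
  obtain ⟨f, hf, hft⟩ := (Finset.all_card_le_biUnion_card_iff_exists_injective t).mp hall
  refine ⟨fun i => (f i).2, fun i => (f i).1, fun i => ?_, fun j i hi i' hi' hii' => ?_⟩
  · have := hft i
    rw [ht] at this
    exact (Finset.mem_product.mp this).1
  · apply hf
    have : (f i).2 = (f i').2 := hi.trans hi'.symm
    exact Prod.ext hii' this
end

section
/- Let w = (w_n) be a weight (a sequence of nonnegative reals with w_1 > 0) with primitive weight s_m = w_1 + ⋯ + w_m. If the map f ↦ sup_m s_m · a_m (where (a_m) is the non-increasing rearrangement of |f|) is a quasi-norm on the space d_{1,∞}(w) of sequences in c_0 for which this quantity is finite, then s is doubling, i.e., there is C with s_{2m} ≤ C s_m for all m. -/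
/-- The non-increasing rearrangement of `|f|` (0-indexed: `rearr f m` is `a_{m+1}`):
the smallest `t ≥ 0` such that at most `m` entries of `|f|` exceed `t`. -/
noncomputable def rearr (f : ℕ → ℝ) (m : ℕ) : ℝ :=
  sInf {t : ℝ | 0 ≤ t ∧ {n : ℕ | t < |f n|}.ncard ≤ m}

/-- The weak Lorentz quasi-norm `‖f‖_{∞,w} = sup_m s_m a_m` (with `s` the primitive
weight, 1-indexed via `s (m+1)`). -/
noncomputable def lorentzNorm (s : ℕ → ℝ) (f : ℕ → ℝ) : ℝ :=
  ⨆ m : ℕ, s (m + 1) * rearr f m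

lemma rearr_indicator (A : Set ℕ) (hA : A.Finite) (k : ℕ) :
    rearr (A.indicator fun _ => (1:ℝ)) k = if k < A.ncard then 1 else 0 := by
  have habs1 : ∀ n ∈ A, |A.indicator (fun _ => (1:ℝ)) n| = 1 := by
    intro n hn; simp [Set.indicator_of_mem hn]
  have habs0 : ∀ n, n ∉ A → |A.indicator (fun _ => (1:ℝ)) n| = 0 := by
    intro n hn; simp [Set.indicator_of_notMem hn]
  have hset : ∀ t : ℝ, t < 1 → A ⊆ {n : ℕ | t < |A.indicator (fun _ => (1:ℝ)) n|} := by
    intro t ht n hn; simp only [Set.mem_setOf_eq, habs1 n hn]; linarith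
  have hset' : ∀ t : ℝ, 0 ≤ t → {n : ℕ | t < |A.indicator (fun _ => (1:ℝ)) n|} ⊆ A := by
    intro t ht n hn
    by_contra h
    simp only [Set.mem_setOf_eq, habs0 n h] at hn
    linarith
  unfold rearr
  by_cases hk : k < A.ncard
  · rw [if_pos hk]
    have heq : {t : ℝ | 0 ≤ t ∧ {n : ℕ | t < |A.indicator (fun _ => (1:ℝ)) n|}.ncard ≤ k}
        = Set.Ici 1 := by
      ext t
      simp only [Set.mem_setOf_eq, Set.mem_Ici]
      constructor
      · rintro ⟨ht0, htc⟩
        by_contra h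
        push_neg at h
        have hAeq : {n : ℕ | t < |A.indicator (fun _ => (1:ℝ)) n|} = A :=
          le_antisymm (hset' t ht0) (hset t h)
        rw [hAeq] at htc; omega
      · intro ht
        refine ⟨by linarith, ?_⟩
        have : {n : ℕ | t < |A.indicator (fun _ => (1:ℝ)) n|} = ∅ := by
          ext n
          simp only [Set.mem_setOf_eq, Set.mem_empty_iff_false, iff_false, not_lt]
          by_cases h : n ∈ A
          · rw [habs1 n h]; linarith
          · rw [habs0 n h]; linarith
        simp [this]
    rw [heq, csInf_Ici]
  · rw [if_neg hk]
    push_neg at hk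
    have heq : {t : ℝ | 0 ≤ t ∧ {n : ℕ | t < |A.indicator (fun _ => (1:ℝ)) n|}.ncard ≤ k}
        = Set.Ici 0 := by
      ext t
      simp only [Set.mem_setOf_eq, Set.mem_Ici]
      refine ⟨fun h => h.1, fun ht => ⟨ht, le_trans (Set.ncard_le_ncard (hset' t ht) hA) hk⟩⟩
    rw [heq, csInf_Ici]

lemma lorentz_of_rearr (s : ℕ → ℝ) (hmono : Monotone s) (hs0 : ∀ m, 0 ≤ s m)
    (f : ℕ → ℝ) (M : ℕ) (hM : 1 ≤ M)
    (hr : ∀ k, rearr f k = if k < M then 1 else 0) :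
    lorentzNorm s f = s M := by
  have hb : ∀ k, s (k+1) * rearr f k ≤ s M := by
    intro k; rw [hr k]
    by_cases h : k < M
    · simpa [h] using hmono (by omega : k + 1 ≤ M)
    · simp [h, hs0 M]
  have hbdd : BddAbove (Set.range fun k => s (k+1) * rearr f k) :=
    ⟨s M, by rintro x ⟨k, rfl⟩; exact hb k⟩
  apply le_antisymm
  · exact ciSup_le hb
  · have h1 := le_ciSup hbdd (M-1)
    rw [hr (M-1)] at h1
    show s M ≤ ⨆ k, s (k+1) * rearr f k
    rw [if_pos (show M-1 < M by omega), mul_one, Nat.sub_add_cancel hM] at h1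
    exact h1

/-- if `f ↦ sup_m s_m a_m` is a quasi-norm on `d_{1,∞}(w)`
(i.e. satisfies a quasi-triangle inequality on the space of `c₀` sequences with
finite weak Lorentz norm), then the primitive weight `s` is doubling. -/
theorem stmt_4 (w : ℕ → ℝ) (hw : ∀ n, 0 ≤ w n) (hw0 : 0 < w 0)
    (s : ℕ → ℝ) (hs : ∀ m, s m = ∑ k ∈ Finset.range m, w k)
    (κ : ℝ)
    (hquasi : ∀ f g : ℕ → ℝ,
      Filter.Tendsto f Filter.atTop (nhds 0) →
      Filter.Tendsto g Filter.atTop (nhds 0) →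
      BddAbove (Set.range fun m => s (m + 1) * rearr f m) →
      BddAbove (Set.range fun m => s (m + 1) * rearr g m) →
      lorentzNorm s (f + g) ≤ κ * (lorentzNorm s f + lorentzNorm s g)) :
    ∃ C : ℝ, ∀ m : ℕ, 1 ≤ m → s (2 * m) ≤ C * s m := by
  have hs0 : ∀ m, 0 ≤ s m := fun m => (hs m) ▸ Finset.sum_nonneg fun k _ => hw k
  have hmono : Monotone s := by
    intro a b hab
    rw [hs a, hs b]
    exact Finset.sum_le_sum_of_subset_of_nonneg (Finset.range_subset_range.2 hab) fun k _ _ => hw k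
  refine ⟨2 * κ, fun m hm => ?_⟩
  set f := (Set.Iio m).indicator (fun _ => (1:ℝ)) with hf
  set g := (Set.Ico m (2*m)).indicator (fun _ => (1:ℝ)) with hg
  have hfg : f + g = (Set.Iio (2*m)).indicator (fun _ => (1:ℝ)) := by
    funext n
    simp only [Pi.add_apply, hf, hg, Set.indicator, Set.mem_Iio, Set.mem_Ico]
    by_cases h1 : n < m <;> by_cases h2 : n < 2*m <;> simp [h1, h2] <;> omega
  have hIio : ∀ M : ℕ, (Set.Iio M).ncard = M := by
    intro M
    rw [show (Set.Iio M) = ↑(Finset.range M) by ext n; simp, Set.ncard_coe_finset,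
      Finset.card_range]
  have hIco : (Set.Ico m (2*m)).ncard = m := by
    rw [show (Set.Ico m (2*m)) = ↑(Finset.Ico m (2*m)) by ext n; simp, Set.ncard_coe_finset,
      Nat.card_Ico]
    omega
  have hrf : ∀ k, rearr f k = if k < m then 1 else 0 := by
    intro k; rw [hf, rearr_indicator _ (Set.finite_Iio m), hIio m]
  have hrg : ∀ k, rearr g k = if k < m then 1 else 0 := by
    intro k; rw [hg, rearr_indicator _ (Set.finite_Ico m (2*m)), hIco]
  have hrfg : ∀ k, rearr (f+g) k = if k < 2*m then 1 else 0 := by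
    intro k; rw [hfg, rearr_indicator _ (Set.finite_Iio (2*m)), hIio]
  have hlf := lorentz_of_rearr s hmono hs0 f m hm hrf
  have hlg := lorentz_of_rearr s hmono hs0 g m hm hrg
  have hlfg := lorentz_of_rearr s hmono hs0 (f+g) (2*m) (by omega) hrfg
  have htend : ∀ (h : ℕ → ℝ) (N : ℕ), (∀ n, N ≤ n → h n = 0) →
      Filter.Tendsto h Filter.atTop (nhds 0) := by
    intro h N hN
    have heq : h =ᶠ[Filter.atTop] (fun _ => (0:ℝ)) := Filter.eventually_atTop.2 ⟨N, hN⟩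
    exact Filter.Tendsto.congr' heq.symm tendsto_const_nhds
  have hbdd : ∀ (h : ℕ → ℝ) (M : ℕ), (∀ k, rearr h k = if k < M then 1 else 0) →
      BddAbove (Set.range fun k => s (k+1) * rearr h k) := by
    intro h M hr
    refine ⟨s M, ?_⟩
    rintro x ⟨k, rfl⟩
    simp only [hr k]
    by_cases hk : k < M
    · simpa [hk] using hmono (by omega : k + 1 ≤ M)
    · simp [hk, hs0 M]
  have key := hquasi f g
    (htend f m (fun n hn => by simp [hf, Set.indicator_of_notMem, Set.mem_Iio]; omega))
    (htend g (2*m) (fun n hn => by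
      rw [hg, Set.indicator_apply_eq_zero]
      intro hmem; simp only [Set.mem_Ico] at hmem; omega))
    (hbdd f m hrf) (hbdd g m hrg)
  rw [hlf, hlg, hlfg] at key
  linarith
end

section
/- Khintchine's inequality upper half for exponent 1: there is a universal constant T such that for every finite family of real numbers (x_i)_{i∈A}, (∑_{i∈A} x_i^2)^{1/2} ≤ T · Ave_{ε_i=±1} |∑_{i∈A} ε_i x_i|, where the average is taken over all 2^{|A|} sign choices. -/
/-!
Write `S ε = ∑ εᵢ xᵢ` and `σ = ∑ xᵢ²`. Peeling off one sign at a time gives the moment formulas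
`Ave S² = σ` and `Ave S⁴ ≤ 3 σ²`. Two applications of Cauchy–Schwarz interpolate the second moment
between the first and the fourth, `(Ave S²)³ ≤ (Ave |S|)² · Ave S⁴`, whence `σ³ ≤ 3 σ² (Ave |S|)²`
and `√σ ≤ √3 · Ave |S|`.
-/

open Finset

theorem Finset.sum_sq_pow_three_le {ι : Type*} (s : Finset ι) (f : ι → ℝ) :
    (∑ i ∈ s, f i ^ 2) ^ 3 ≤ (∑ i ∈ s, |f i|) ^ 2 * ∑ i ∈ s, f i ^ 4 := by
  set A₂ := ∑ i ∈ s, f i ^ 2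
  set A₄ := ∑ i ∈ s, f i ^ 4
  have h₁ : A₂ ^ 2 ≤ (∑ i ∈ s, |f i|) * ∑ i ∈ s, |f i| ^ 3 :=
    sum_sq_le_sum_mul_sum_of_sq_le_mul s (fun _ _ ↦ abs_nonneg _) (fun _ _ ↦ by positivity)
      fun i _ ↦ le_of_eq (by rw [← sq_abs (f i)]; ring)
  have h₂ : (∑ i ∈ s, |f i| ^ 3) ^ 2 ≤ A₂ * A₄ :=
    sum_sq_le_sum_mul_sum_of_sq_le_mul s (fun _ _ ↦ sq_nonneg _) (fun _ _ ↦ by positivity)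
      fun i _ ↦ le_of_eq (by rw [← pow_mul, Even.pow_abs ⟨3, rfl⟩]; ring)
  have hA₂ : 0 ≤ A₂ := sum_nonneg fun _ _ ↦ sq_nonneg _
  have h : A₂ * A₂ ^ 3 ≤ A₂ * ((∑ i ∈ s, |f i|) ^ 2 * A₄) :=
    calc A₂ * A₂ ^ 3 = (A₂ ^ 2) ^ 2 := by ring
      _ ≤ ((∑ i ∈ s, |f i|) * ∑ i ∈ s, |f i| ^ 3) ^ 2 := by gcongr
      _ ≤ (∑ i ∈ s, |f i|) ^ 2 * (A₂ * A₄) := by rw [mul_pow]; gcongr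
      _ = A₂ * ((∑ i ∈ s, |f i|) ^ 2 * A₄) := by ring
  rcases hA₂.eq_or_lt with hzero | hpos
  · rw [← hzero, zero_pow three_ne_zero]
    exact mul_nonneg (sq_nonneg _) (sum_nonneg fun _ _ ↦ by positivity)
  · exact le_of_mul_le_mul_left h hpos

theorem Finset.sum_sq_le_of_sum_pow_four_le {ι : Type*} {s : Finset ι} {f : ι → ℝ} {C : ℝ}
    (hC : 0 ≤ C) (h : ∑ i ∈ s, f i ^ 4 ≤ C * (∑ i ∈ s, f i ^ 2) ^ 2) :
    ∑ i ∈ s, f i ^ 2 ≤ C * (∑ i ∈ s, |f i|) ^ 2 := by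
  set A₂ := ∑ i ∈ s, f i ^ 2
  have hA₂ : 0 ≤ A₂ := sum_nonneg fun _ _ ↦ sq_nonneg _
  have h' : A₂ ^ 2 * A₂ ≤ A₂ ^ 2 * (C * (∑ i ∈ s, |f i|) ^ 2) :=
    calc A₂ ^ 2 * A₂ = A₂ ^ 3 := by ring
      _ ≤ (∑ i ∈ s, |f i|) ^ 2 * ∑ i ∈ s, f i ^ 4 := s.sum_sq_pow_three_le f
      _ ≤ (∑ i ∈ s, |f i|) ^ 2 * (C * A₂ ^ 2) := by gcongr
      _ = A₂ ^ 2 * (C * (∑ i ∈ s, |f i|) ^ 2) := by ring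
  rcases hA₂.eq_or_lt with hzero | hpos
  · rw [← hzero]
    positivity
  · exact le_of_mul_le_mul_left h' (by positivity)

namespace Khintchine

def signedSum {n : ℕ} (x : Fin n → ℝ) (ε : Fin n → Bool) : ℝ :=
  ∑ i, (if ε i then (1 : ℝ) else -1) * x i

lemma sum_comp_signedSum_succ {n : ℕ} (f : ℝ → ℝ) (x : Fin (n + 1) → ℝ) :
    ∑ ε, f (signedSum x ε) =
      ∑ ε, (f (x 0 + signedSum (Fin.tail x) ε) + f (-x 0 + signedSum (Fin.tail x) ε)) := by
  rw [← (Fin.consEquiv fun _ ↦ Bool).sum_comp, Fintype.sum_prod_type_right]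
  refine sum_congr rfl fun ε _ ↦ ?_
  rw [Fintype.sum_bool]
  congr 1 <;> simp [signedSum, Fin.sum_univ_succ, Fin.consEquiv, Fin.tail]

lemma sum_signedSum_sq {n : ℕ} (x : Fin n → ℝ) :
    ∑ ε, signedSum x ε ^ 2 = 2 ^ n * ∑ i, x i ^ 2 := by
  induction n with
  | zero => simp [signedSum]
  | succ n ih =>
    have parallelogram (a s : ℝ) : (a + s) ^ 2 + (-a + s) ^ 2 = 2 * a ^ 2 + 2 * s ^ 2 := by ring
    simp_rw [sum_comp_signedSum_succ (· ^ 2), parallelogram, sum_add_distrib, ← mul_sum, ih,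
      Fin.sum_univ_succ (f := fun i ↦ x i ^ 2)]
    simp only [sum_const, card_univ, Fintype.card_fun, Fintype.card_bool, Fintype.card_fin,
      nsmul_eq_mul, Nat.cast_pow, Nat.cast_ofNat, Fin.tail]
    ring

lemma sum_signedSum_pow_four_le {n : ℕ} (x : Fin n → ℝ) :
    ∑ ε, signedSum x ε ^ 4 ≤ 3 * 2 ^ n * (∑ i, x i ^ 2) ^ 2 := by
  induction n with
  | zero => simp [signedSum]
  | succ n ih =>
    have even_part (a s : ℝ) :
        (a + s) ^ 4 + (-a + s) ^ 4 = 2 * a ^ 4 + 12 * a ^ 2 * s ^ 2 + 2 * s ^ 4 := by ring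
    simp_rw [sum_comp_signedSum_succ (· ^ 4), even_part, sum_add_distrib, ← mul_sum,
      sum_signedSum_sq, Fin.sum_univ_succ (f := fun i ↦ x i ^ 2)]
    have ih := ih (Fin.tail x)
    simp only [sum_const, card_univ, Fintype.card_fun, Fintype.card_bool, Fintype.card_fin,
      nsmul_eq_mul, Nat.cast_pow, Nat.cast_ofNat, pow_succ (2 : ℝ) n, Fin.tail] at ih ⊢
    nlinarith [mul_nonneg (pow_nonneg zero_le_two n) (pow_nonneg (sq_nonneg (x 0)) 2)]

lemma sum_sq_le_three_mul_sq_average_abs_signedSum {n : ℕ} (x : Fin n → ℝ) :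
    ∑ i, x i ^ 2 ≤ 3 * ((∑ ε, |signedSum x ε|) / 2 ^ n) ^ 2 := by
  have h := univ.sum_sq_le_of_sum_pow_four_le (f := signedSum x) (C := 3 / 2 ^ n) (by positivity)
    ((sum_signedSum_pow_four_le x).trans_eq (by rw [sum_signedSum_sq]; field_simp))
  rw [sum_signedSum_sq] at h
  calc ∑ i, x i ^ 2 = 2 ^ n * (∑ i, x i ^ 2) / 2 ^ n := by field_simp
    _ ≤ 3 / 2 ^ n * (∑ ε, |signedSum x ε|) ^ 2 / 2 ^ n := by gcongr
    _ = 3 * ((∑ ε, |signedSum x ε|) / 2 ^ n) ^ 2 := by ring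

end Khintchine

/-- upper half of Khintchine's inequality for exponent 1. -/
theorem stmt_7 : ∃ T : ℝ, 0 < T ∧ ∀ (n : ℕ) (x : Fin n → ℝ),
    (∑ i, x i ^ 2) ^ ((1 : ℝ) / 2) ≤
      T * ((∑ ε : Fin n → Bool, |∑ i, (if ε i then (1 : ℝ) else -1) * x i|) / 2 ^ n) := by
  refine ⟨√3, by positivity, fun n x ↦ ?_⟩
  rw [← Real.sqrt_eq_rpow, ← Real.sqrt_sq (by positivity : 0 ≤ _ / (2 : ℝ) ^ n),
    ← Real.sqrt_mul zero_le_three]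
  exact Real.sqrt_le_sqrt (Khintchine.sum_sq_le_three_mul_sq_average_abs_signedSum x)
end

section
/- Let X be a quasi-Banach space whose quasi-norm ‖·‖ is a p-norm (0 < p ≤ 1), and let (x_n) be a basis of X. Then for every finite set A and all real scalars (a_n)_{n∈A} with |a_n| ≤ 1 for all n ∈ A, we have ‖∑_{n∈A} a_n x_n‖ ≤ (2/(2^p−1))^{1/p} · sup_{ε∈{±1}^A} ‖∑_{n∈A} ε_n x_n‖. -/
/-- in a `p`-normed space (`0 < p ≤ 1`), for scalars `|aₙ| ≤ 1`,
`‖∑ aₙ xₙ‖ ≤ (2/(2^p−1))^{1/p} · sup_{ε=±1} ‖∑ εₙ xₙ‖`. -/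
theorem stmt_15 {X : Type*} [AddCommGroup X] [Module ℝ X] {ι : Type*} [Fintype ι]
    (p : ℝ) (hp0 : 0 < p) (hp1 : p ≤ 1)
    (Q : X → ℝ) (hQnonneg : ∀ g, 0 ≤ Q g)
    (hQp : ∀ g h : X, Q (g + h) ^ p ≤ Q g ^ p + Q h ^ p)
    (hQhom : ∀ (c : ℝ) (g : X), Q (c • g) = |c| * Q g)
    (x : ι → X) (a : ι → ℝ) (ha : ∀ i, |a i| ≤ 1) :
    Q (∑ i, a i • x i) ≤
      (2 / ((2 : ℝ) ^ p - 1)) ^ (1 / p) *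
        ⨆ ε : ι → Bool, Q (∑ i, (if ε i then (1 : ℝ) else -1) • x i) := by
  classical
  have hQ0 : Q 0 = 0 := by simpa using hQhom 0 0
  set M := ⨆ ε : ι → Bool, Q (∑ i, (if ε i then (1 : ℝ) else -1) • x i) with hMdef
  have hMbdd : BddAbove (Set.range fun ε : ι → Bool =>
      Q (∑ i, (if ε i then (1 : ℝ) else -1) • x i)) :=
    Set.Finite.bddAbove (Set.finite_range _)
  have hεleM : ∀ ε : ι → Bool, Q (∑ i, (if ε i then (1 : ℝ) else -1) • x i) ≤ M :=
    fun ε => le_ciSup hMbdd ε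
  have hM0 : 0 ≤ M := (hQnonneg _).trans (hεleM fun _ => true)
  -- subadditivity over finite sums
  have hQsum : ∀ (s : Finset ι) (f : ι → X),
      Q (∑ i ∈ s, f i) ^ p ≤ ∑ i ∈ s, Q (f i) ^ p := by
    intro s f
    induction s using Finset.cons_induction with
    | empty => simp [hQ0, Real.zero_rpow hp0.ne']
    | cons i s hi ih =>
      rw [Finset.sum_cons, Finset.sum_cons]
      calc Q (f i + ∑ j ∈ s, f j) ^ p ≤ Q (f i) ^ p + Q (∑ j ∈ s, f j) ^ p := hQp _ _
        _ ≤ _ := by linarith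
  set B : ℝ := ∑ i, Q (x i) ^ p with hBdef
  -- uniform bound for admissible coefficient vectors
  have hbound : ∀ c : ι → ℝ, (∀ i, |c i| ≤ 1) → Q (∑ i, c i • x i) ^ p ≤ B := by
    intro c hc
    calc Q (∑ i, c i • x i) ^ p ≤ ∑ i, Q (c i • x i) ^ p := hQsum _ _
      _ = ∑ i, |c i| ^ p * Q (x i) ^ p := by
          refine Finset.sum_congr rfl fun i _ => ?_
          rw [hQhom, Real.mul_rpow (abs_nonneg _) (hQnonneg _)]
      _ ≤ ∑ i, 1 * Q (x i) ^ p := by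
          refine Finset.sum_le_sum fun i _ => ?_
          exact mul_le_mul_of_nonneg_right
            (Real.rpow_le_one (abs_nonneg _) (hc i) hp0.le)
            (Real.rpow_nonneg (hQnonneg _) _)
      _ = B := by simp [hBdef]
  set S : Set ℝ := (fun c : ι → ℝ => Q (∑ i, c i • x i)) '' {c | ∀ i, |c i| ≤ 1} with hSdef
  have hSne : S.Nonempty := ⟨_, ⟨0, fun i => by simp, rfl⟩⟩
  have hSbdd : BddAbove S := by
    refine ⟨B ^ (1 / p), ?_⟩
    rintro y ⟨c, hc, rfl⟩
    show Q (∑ i, c i • x i) ≤ B ^ (1 / p)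
    have h1 : Q (∑ i, c i • x i) = (Q (∑ i, c i • x i) ^ p) ^ (1 / p) := by
      rw [← Real.rpow_mul (hQnonneg _), mul_one_div, div_self hp0.ne', Real.rpow_one]
    rw [h1]
    exact Real.rpow_le_rpow (Real.rpow_nonneg (hQnonneg _) _) (hbound c hc)
      (by positivity)
  set T : ℝ := sSup S with hTdef
  have hT0 : 0 ≤ T := by
    have : (0 : ℝ) ∈ S := ⟨0, fun i => by simp, by simp [hQ0]⟩
    exact le_csSup hSbdd this
  have h2p : (1 : ℝ) < 2 ^ p := by
    have := Real.rpow_lt_rpow_of_exponent_lt (by norm_num : (1:ℝ) < 2) hp0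
    simpa using this
  -- key inequality for any admissible c
  have hkey : ∀ c : ι → ℝ, (∀ i, |c i| ≤ 1) →
      Q (∑ i, c i • x i) ^ p ≤ (2 ^ p)⁻¹ * (M ^ p + T ^ p) := by
    intro c hc
    set ε : ι → Bool := fun i => decide (0 ≤ c i) with hεdef
    set b : ι → ℝ := fun i => 2 * c i - (if ε i then (1:ℝ) else -1) with hbdef2
    have hb : ∀ i, |b i| ≤ 1 := by
      intro i
      obtain ⟨h1, h2⟩ := abs_le.mp (hc i)
      by_cases h : 0 ≤ c i
      · simp only [hbdef2, hεdef]
        rw [if_pos (by simpa using h), abs_le]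
        constructor <;> linarith
      · simp only [hbdef2, hεdef]
        rw [if_neg (by simpa using h), abs_le]
        constructor <;> linarith
    have hdecomp : ∑ i, c i • x i =
        (2:ℝ)⁻¹ • (∑ i, (if ε i then (1:ℝ) else -1) • x i + ∑ i, b i • x i) := by
      rw [smul_add, Finset.smul_sum, Finset.smul_sum, ← Finset.sum_add_distrib]
      refine Finset.sum_congr rfl fun i _ => ?_
      rw [smul_smul, smul_smul, ← add_smul]
      congr 1
      simp only [hbdef2]
      ring
    have hQb : Q (∑ i, b i • x i) ≤ T := le_csSup hSbdd ⟨b, hb, rfl⟩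
    have hQε : Q (∑ i, (if ε i then (1:ℝ) else -1) • x i) ≤ M := hεleM ε
    calc Q (∑ i, c i • x i) ^ p
        = ((2:ℝ)⁻¹ * Q (∑ i, (if ε i then (1:ℝ) else -1) • x i + ∑ i, b i • x i)) ^ p := by
          rw [hdecomp, hQhom, abs_of_nonneg (by norm_num : (0:ℝ) ≤ (2:ℝ)⁻¹)]
      _ = ((2:ℝ)⁻¹) ^ p * Q (∑ i, (if ε i then (1:ℝ) else -1) • x i + ∑ i, b i • x i) ^ p := by
          rw [Real.mul_rpow (by norm_num) (hQnonneg _)]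
      _ ≤ ((2:ℝ)⁻¹) ^ p * (Q (∑ i, (if ε i then (1:ℝ) else -1) • x i) ^ p
            + Q (∑ i, b i • x i) ^ p) := by
          refine mul_le_mul_of_nonneg_left (hQp _ _) (by positivity)
      _ ≤ ((2:ℝ)⁻¹) ^ p * (M ^ p + T ^ p) := by
          refine mul_le_mul_of_nonneg_left ?_ (by positivity)
          exact add_le_add (Real.rpow_le_rpow (hQnonneg _) hQε hp0.le)
            (Real.rpow_le_rpow (hQnonneg _) hQb hp0.le)
      _ = (2 ^ p)⁻¹ * (M ^ p + T ^ p) := by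
          rw [← Real.rpow_neg_one (2:ℝ), ← Real.rpow_mul (by norm_num : (0:ℝ) ≤ 2),
            ← Real.rpow_neg (by norm_num : (0:ℝ) ≤ 2)]
          ring_nf
  -- T^p ≤ (2^p)⁻¹ (M^p + T^p)
  have hTp : T ^ p ≤ (2 ^ p)⁻¹ * (M ^ p + T ^ p) := by
    have hR0 : (0:ℝ) ≤ (2 ^ p)⁻¹ * (M ^ p + T ^ p) := by positivity
    have hTle : T ≤ ((2 ^ p)⁻¹ * (M ^ p + T ^ p)) ^ (1 / p) := by
      refine csSup_le hSne ?_
      rintro y ⟨c, hc, rfl⟩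
      show Q (∑ i, c i • x i) ≤ ((2 ^ p)⁻¹ * (M ^ p + T ^ p)) ^ (1 / p)
      have h1 : Q (∑ i, c i • x i) = (Q (∑ i, c i • x i) ^ p) ^ (1 / p) := by
        rw [← Real.rpow_mul (hQnonneg _), mul_one_div, div_self hp0.ne', Real.rpow_one]
      rw [h1]
      exact Real.rpow_le_rpow (Real.rpow_nonneg (hQnonneg _) _) (hkey c hc) (by positivity)
    calc T ^ p ≤ (((2 ^ p)⁻¹ * (M ^ p + T ^ p)) ^ (1 / p)) ^ p :=
          Real.rpow_le_rpow hT0 hTle hp0.le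
      _ = (2 ^ p)⁻¹ * (M ^ p + T ^ p) := by
          rw [← Real.rpow_mul hR0, one_div, inv_mul_cancel₀ hp0.ne', Real.rpow_one]
  have h2ppos : (0:ℝ) < 2 ^ p := by linarith
  have hu : (0:ℝ) < 2 ^ p - 1 := by linarith
  -- deduce T^p ≤ M^p / (2^p - 1)
  have hmul : T ^ p * 2 ^ p ≤ M ^ p + T ^ p := by
    have h := mul_le_mul_of_nonneg_right hTp h2ppos.le
    calc T ^ p * 2 ^ p ≤ (2 ^ p)⁻¹ * (M ^ p + T ^ p) * 2 ^ p := h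
      _ = M ^ p + T ^ p := by field_simp
  have hTple : T ^ p ≤ M ^ p * (2 ^ p - 1)⁻¹ := by
    rw [← div_eq_mul_inv, le_div_iff₀ hu]
    nlinarith [hmul]
  -- conclude
  have hQaT : Q (∑ i, a i • x i) ≤ T := le_csSup hSbdd ⟨a, ha, rfl⟩
  have hTfinal : T ≤ (2 / ((2:ℝ) ^ p - 1)) ^ (1 / p) * M := by
    have h1 : T = (T ^ p) ^ (1 / p) := by
      rw [← Real.rpow_mul hT0, mul_one_div, div_self hp0.ne', Real.rpow_one]
    calc T = (T ^ p) ^ (1 / p) := h1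
      _ ≤ (M ^ p * (2 ^ p - 1)⁻¹) ^ (1 / p) :=
          Real.rpow_le_rpow (Real.rpow_nonneg hT0 _) hTple (by positivity)
      _ = M * ((2 ^ p - 1)⁻¹) ^ (1 / p) := by
          rw [Real.mul_rpow (Real.rpow_nonneg hM0 _) (by positivity),
            ← Real.rpow_mul hM0, mul_one_div, div_self hp0.ne', Real.rpow_one]
      _ ≤ M * (2 / ((2:ℝ) ^ p - 1)) ^ (1 / p) := by
          refine mul_le_mul_of_nonneg_left ?_ hM0
          refine Real.rpow_le_rpow (by positivity) ?_ (by positivity)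
          rw [inv_eq_one_div, div_le_div_iff₀ hu hu]
          nlinarith
      _ = (2 / ((2:ℝ) ^ p - 1)) ^ (1 / p) * M := mul_comm _ _
  exact hQaT.trans hTfinal
end
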